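/- Let D = M₊ ⊕ M₋ be a closed subspace of ℋ, where M₊ ⊆ ℋ₊ and M₋ ⊆ ℋ₋ are closed subspaces, and let T₀ : D → ℋ be a symmetric linear strong contraction satisfying J T₀ f = −T₀ J f for all f ∈ D. Set L₊ = (I + T₀)(M₊) and L₋ = (I + T₀)(M₋). Then L₊ is a maximal positive subspace and L₋ is a maximal negative subspace of the Krein space (ℋ, [·,·]) if and only if D = ℋ (equivalently, M₊ = ℋ₊ and M₋ = ℋ₋); in this case T₀ is a self-adjoint strong contraction defined on all of ℋ. -/

import Mathlib

/-!
For `J a = a` and `J b = -b` the vectors `a`, `b` are orthogonal and `[a + b, a + b] = ‖a‖² - ‖b‖²`,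
so the graph `{x + T₀ x : x ∈ M₊}` of a strong contraction `M₊ → ℋ₋` is positive. If `M₊ = ℋ₊`
then `L₊ + ℋ₋ = ℋ`, and a positive subspace meets `ℋ₋` only in `0`, so no positive subspace
properly contains `L₊`. If `M₊ ≠ ℋ₊`, a vector `e ∈ ℋ₊ ⊖ M₊` can be added to `L₊` keeping it
positive, while `e ∉ L₊` because `e ⊥ M₊`. The negative case is the positive one for `-J`.
-/

theorem IsCompl.sup_eq_top_iff_of_le {α : Type*} [Lattice α] [BoundedOrder α]
    [IsModularLattice α] {a b a' b' : α} (h : IsCompl a' b') (ha : a ≤ a') (hb : b ≤ b') :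
    a ⊔ b = ⊤ ↔ a = a' ∧ b = b' := by
  refine ⟨fun hab => ⟨?_, ?_⟩, fun ⟨rfl, rfl⟩ => h.sup_eq_top⟩
  · calc a = a ⊔ b ⊓ a' := by
          rw [(h.disjoint.symm.mono_left hb).eq_bot, sup_bot_eq]
      _ = a' := by rw [← sup_inf_assoc_of_le b ha, hab, top_inf_eq]
  · calc b = b ⊔ a ⊓ b' := by
          rw [(h.disjoint.mono_left ha).eq_bot, sup_bot_eq]
      _ = b' := by rw [← sup_inf_assoc_of_le a hb, sup_comm, hab, top_inf_eq]

namespace LinearMap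

variable {R V : Type*} [Ring R] [AddCommGroup V] [Module R V]

theorem isCompl_ker_sub_id_ker_add_id [Invertible (2 : R)] {J : V →ₗ[R] V}
    (hJ : Function.Involutive J) :
    IsCompl (ker (J - id)) (ker (J + id)) := by
  refine ⟨?_, ?_⟩
  · rw [disjoint_iff_inf_le]
    rintro x ⟨hp, hm⟩
    simp only [SetLike.mem_coe, mem_ker, sub_apply, add_apply, id_apply, sub_eq_zero,
      add_eq_zero_iff_eq_neg] at hp hm
    have h2 : (2 : R) • x = 0 := by rw [two_smul]; nth_rewrite 1 [← hp]; rw [hm, neg_add_cancel]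
    simpa using congrArg ((⅟2 : R) • ·) h2
  · rw [codisjoint_iff_le_sup]
    intro x _
    have hx : x = (⅟2 : R) • (x + J x) + (⅟2 : R) • (x - J x) := by
      rw [← smul_add, add_add_sub_cancel, ← two_smul R x, smul_smul, invOf_mul_self, one_smul]
    rw [hx]
    refine Submodule.add_mem_sup ?_ ?_
    · simp [hJ x, add_comm]
    · simp [hJ x, smul_sub]

theorem map_id_add_sup_eq_top {M N : Submodule R V} {T : V →ₗ[R] V} (hMN : M ⊔ N = ⊤)
    (hT : ∀ x ∈ M, T x ∈ N) : M.map (id + T) ⊔ N = ⊤ := by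
  refine eq_top_iff.2 (hMN ▸ sup_le (fun x hx => ?_) le_sup_right)
  have hx' : x = (id + T : V →ₗ[R] V) x + -T x := by simp
  rw [hx']
  exact Submodule.add_mem_sup (Submodule.mem_map_of_mem hx) (N.neg_mem (hT x hx))

end LinearMap

section KreinSpace

open LinearMap

variable {H : Type*} [NormedAddCommGroup H] [InnerProductSpace ℂ H]

def IsPositiveSubspace (J : H →L[ℂ] H) (L : Submodule ℂ H) : Prop :=
  ∀ f ∈ L, f ≠ 0 → 0 < (inner ℂ (J f) f : ℂ).re

def IsMaximalPositiveSubspace (J : H →L[ℂ] H) (L : Submodule ℂ H) : Prop :=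
  IsPositiveSubspace J L ∧ ∀ L' : Submodule ℂ H, IsPositiveSubspace J L' → L ≤ L' → L = L'

theorem isPositiveSubspace_neg_iff {J : H →L[ℂ] H} {L : Submodule ℂ H} :
    IsPositiveSubspace (-J) L ↔ ∀ f ∈ L, f ≠ 0 → (inner ℂ (J f) f : ℂ).re < 0 := by
  simp [IsPositiveSubspace, inner_neg_left]

theorem isMaximalPositiveSubspace_neg_iff {J : H →L[ℂ] H} {L : Submodule ℂ H} :
    IsMaximalPositiveSubspace (-J) L ↔ (∀ f ∈ L, f ≠ 0 → (inner ℂ (J f) f : ℂ).re < 0) ∧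
      ∀ L' : Submodule ℂ H, (∀ f ∈ L', f ≠ 0 → (inner ℂ (J f) f : ℂ).re < 0) → L ≤ L' → L = L' := by
  simp only [IsMaximalPositiveSubspace, isPositiveSubspace_neg_iff]

variable {J : H →L[ℂ] H}

theorem IsPositiveSubspace.eq_zero_of_apply_eq_neg {L : Submodule ℂ H}
    (hL : IsPositiveSubspace J L) {h : H} (hh : h ∈ L) (hJh : J h = -h) : h = 0 := by
  by_contra hne
  have hpos := hL h hh hne
  have hsq : (inner ℂ h h : ℂ).re = ‖h‖ ^ 2 := inner_self_eq_norm_sq (𝕜 := ℂ) h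
  rw [hJh, inner_neg_left, Complex.neg_re, hsq] at hpos
  linarith [sq_nonneg ‖h‖]

theorem IsPositiveSubspace.eq_of_le_of_sup_ker_add_id_eq_top {L L' : Submodule ℂ H}
    (hL' : IsPositiveSubspace J L') (hle : L ≤ L')
    (htop : L ⊔ ker ((J : H →ₗ[ℂ] H) + LinearMap.id) = ⊤) :
    L = L' := by
  refine le_antisymm hle fun f hf => ?_
  obtain ⟨l, hl, h, hh, rfl⟩ := Submodule.mem_sup.1 (htop ▸ Submodule.mem_top : f ∈ L ⊔ _)
  have hJh : J h = -h := by simpa [add_eq_zero_iff_eq_neg] using hh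
  have hh' : h ∈ L' := by simpa using L'.sub_mem hf (hle hl)
  rw [hL'.eq_zero_of_apply_eq_neg hh' hJh, add_zero]
  exact hl

theorem inner_eq_zero_of_apply_eq_self_of_apply_eq_neg (hJ : (J : H →ₗ[ℂ] H).IsSymmetric)
    {a b : H} (ha : J a = a) (hb : J b = -b) : inner ℂ a b = 0 := by
  have h := hJ a b
  simp only [ContinuousLinearMap.coe_coe, ha, hb, inner_neg_right] at h
  linear_combination h / 2

theorem re_inner_apply_add_eq_norm_sq_sub_norm_sq (hJ : (J : H →ₗ[ℂ] H).IsSymmetric)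
    {a b : H} (ha : J a = a) (hb : J b = -b) :
    (inner ℂ (J (a + b)) (a + b) : ℂ).re = ‖a‖ ^ 2 - ‖b‖ ^ 2 := by
  have hab := inner_eq_zero_of_apply_eq_self_of_apply_eq_neg hJ ha hb
  have hba : inner ℂ b a = 0 := by rw [← inner_conj_symm, hab, map_zero]
  rw [map_add, ha, hb, ← sub_eq_add_neg, inner_sub_left, inner_add_right, inner_add_right, hab,
    hba, inner_self_eq_norm_sq_to_K, inner_self_eq_norm_sq_to_K, add_zero, zero_add]
  norm_cast

section GraphSubspace

variable (hJ : (J : H →ₗ[ℂ] H).IsSymmetric) {M : Submodule ℂ H} {T : H →ₗ[ℂ] H}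
  (hM : ∀ x ∈ M, J x = x) (hTM : ∀ x ∈ M, J (T x) = -T x)
include hJ hM hTM

theorem isPositiveSubspace_map_id_add_sup_span_singleton
    (hsc : ∀ x ∈ M, x ≠ 0 → ‖T x‖ < ‖x‖) {e : H} (he : e ∈ Mᗮ) (hJe : J e = e) :
    IsPositiveSubspace J (M.map (LinearMap.id + T) ⊔ ℂ ∙ e) := by
  intro w hw hne
  obtain ⟨g, hg, z, hz, rfl⟩ := Submodule.mem_sup.1 hw
  obtain ⟨x, hx, rfl⟩ := Submodule.mem_map.1 hg
  obtain ⟨c, rfl⟩ := Submodule.mem_span_singleton.1 hz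
  have hxe : ‖x + c • e‖ * ‖x + c • e‖ = ‖x‖ * ‖x‖ + ‖c • e‖ * ‖c • e‖ :=
    norm_add_sq_eq_norm_sq_add_norm_sq_of_inner_eq_zero _ _
      (Submodule.inner_right_of_mem_orthogonal hx (Mᗮ.smul_mem c he))
  have hlt : ‖T x‖ < ‖x + c • e‖ := by
    rcases eq_or_ne x 0 with rfl | hx0
    · simpa using hne
    · have hx_le : ‖x‖ ≤ ‖x + c • e‖ := by
        nlinarith [norm_nonneg x, norm_nonneg (x + c • e), mul_self_nonneg ‖c • e‖]
      exact (hsc x hx hx0).trans_le hx_le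
  have hsplit : (LinearMap.id + T : H →ₗ[ℂ] H) x + c • e = (x + c • e) + T x := by
    simp only [LinearMap.add_apply, LinearMap.id_apply]; abel
  rw [hsplit, re_inner_apply_add_eq_norm_sq_sub_norm_sq hJ
    (by rw [map_add, map_smul, hM x hx, hJe]) (hTM x hx), sub_pos]
  exact pow_lt_pow_left₀ hlt (norm_nonneg _) two_ne_zero

theorem isPositiveSubspace_map_id_add (hsc : ∀ x ∈ M, x ≠ 0 → ‖T x‖ < ‖x‖) :
    IsPositiveSubspace J (M.map (LinearMap.id + T)) := by
  simpa using isPositiveSubspace_map_id_add_sup_span_singleton hJ hM hTM hsc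
    Mᗮ.zero_mem (map_zero J)

theorem eq_zero_of_mem_map_id_add_of_mem_orthogonal {e : H}
    (he : e ∈ M.map (LinearMap.id + T)) (he' : e ∈ Mᗮ) : e = 0 := by
  obtain ⟨x, hx, rfl⟩ := Submodule.mem_map.1 he
  have hxx : inner ℂ x x = 0 := by
    simpa [inner_add_right, inner_eq_zero_of_apply_eq_self_of_apply_eq_neg hJ (hM x hx)
      (hTM x hx)] using Submodule.inner_right_of_mem_orthogonal hx he'
  simp [inner_self_eq_zero.1 hxx]

theorem isMaximalPositiveSubspace_map_id_add_iff (hJinv : Function.Involutive J)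
    (hsc : ∀ x ∈ M, x ≠ 0 → ‖T x‖ < ‖x‖) [M.HasOrthogonalProjection] :
    IsMaximalPositiveSubspace J (M.map (LinearMap.id + T)) ↔
      M = ker ((J : H →ₗ[ℂ] H) - LinearMap.id) := by
  have hMK : M ≤ ker ((J : H →ₗ[ℂ] H) - LinearMap.id) := fun x hx => by
    simp [hM x hx]
  constructor
  · rintro ⟨-, hmax⟩
    refine le_antisymm hMK ?_
    suffices Mᗮ ⊓ ker ((J : H →ₗ[ℂ] H) - LinearMap.id) = ⊥ by
      rw [← Submodule.sup_orthogonal_inf_of_hasOrthogonalProjection hMK, this, sup_bot_eq]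
    refine eq_bot_iff.2 fun e ⟨he, hJe⟩ => ?_
    replace hJe : J e = e := by simpa [sub_eq_zero] using hJe
    have heL : e ∈ M.map (LinearMap.id + T) :=
      hmax _ (isPositiveSubspace_map_id_add_sup_span_singleton hJ hM hTM hsc he hJe)
        le_sup_left ▸ Submodule.mem_sup_right (Submodule.mem_span_singleton_self e)
    exact eq_zero_of_mem_map_id_add_of_mem_orthogonal hJ hM hTM heL he
  · rintro rfl
    refine ⟨isPositiveSubspace_map_id_add hJ hM hTM hsc, fun L' hL' hle =>
      hL'.eq_of_le_of_sup_ker_add_id_eq_top hle ?_⟩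
    exact map_id_add_sup_eq_top (isCompl_ker_sub_id_ker_add_id hJinv).sup_eq_top
      fun x hx => by simpa [add_eq_zero_iff_eq_neg] using hTM x hx

end GraphSubspace

end KreinSpace

theorem stmt_4_general
    {H : Type*} [NormedAddCommGroup H] [InnerProductSpace ℂ H] [CompleteSpace H]
    (J : H →L[ℂ] H) (hJsa : IsSelfAdjoint J) (hJ2 : J ∘L J = 1)
    (Mp Mm : Submodule ℂ H)
    (hMpc : IsClosed (Mp : Set H)) (hMmc : IsClosed (Mm : Set H))
    (hMp : ∀ x ∈ Mp, J x = x) (hMm : ∀ x ∈ Mm, J x = -x)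
    (D : Submodule ℂ H) (hD : D = Mp ⊔ Mm)
    (T₀ : H →ₗ[ℂ] H)
    (hsc : ∀ f ∈ D, f ≠ 0 → ‖T₀ f‖ < ‖f‖)
    (hanti : ∀ f ∈ D, J (T₀ f) = -T₀ (J f))
    (hsymm : ∀ f ∈ D, ∀ g ∈ D, (inner ℂ (T₀ f) g : ℂ) = inner ℂ f (T₀ g)) :
    (((∀ f ∈ Mp.map (LinearMap.id + T₀), f ≠ 0 → 0 < (inner ℂ (J f) f : ℂ).re) ∧
      (∀ L' : Submodule ℂ H, (∀ f ∈ L', f ≠ 0 → 0 < (inner ℂ (J f) f : ℂ).re) →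
        Mp.map (LinearMap.id + T₀) ≤ L' → Mp.map (LinearMap.id + T₀) = L') ∧
      (∀ f ∈ Mm.map (LinearMap.id + T₀), f ≠ 0 → (inner ℂ (J f) f : ℂ).re < 0) ∧
      (∀ L' : Submodule ℂ H, (∀ f ∈ L', f ≠ 0 → (inner ℂ (J f) f : ℂ).re < 0) →
        Mm.map (LinearMap.id + T₀) ≤ L' → Mm.map (LinearMap.id + T₀) = L')) ↔
      D = ⊤) ∧
    (D = ⊤ ↔ (Mp = LinearMap.ker (J.toLinearMap - LinearMap.id) ∧
              Mm = LinearMap.ker (J.toLinearMap + LinearMap.id))) ∧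
    (D = ⊤ → (LinearMap.IsSymmetric T₀ ∧ ∀ f : H, f ≠ 0 → ‖T₀ f‖ < ‖f‖)) := by
  have hMpD : Mp ≤ D := hD ▸ le_sup_left
  have hMmD : Mm ≤ D := hD ▸ le_sup_right
  have hJinv : Function.Involutive J := fun x => by simpa using congr($hJ2 x)
  have : CompleteSpace Mp := hMpc.completeSpace_coe
  have : CompleteSpace Mm := hMmc.completeSpace_coe
  have hLp := isMaximalPositiveSubspace_map_id_add_iff hJsa.isSymmetric hMp
    (fun x hx => by rw [hanti x (hMpD hx), hMp x hx]) hJinv (fun x hx => hsc x (hMpD hx))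
  have hLm := isMaximalPositiveSubspace_map_id_add_iff (J := -J) hJsa.neg.isSymmetric
    (fun x hx => by simp [hMm x hx]) (fun x hx => by simp [hanti x (hMmD hx), hMm x hx])
    (fun x => by simp [hJinv x]) (fun x hx => hsc x (hMmD hx))
  rw [ContinuousLinearMap.toLinearMap_neg, ← neg_add', LinearMap.ker_neg,
    isMaximalPositiveSubspace_neg_iff] at hLm
  have hDtop : D = ⊤ ↔ Mp = LinearMap.ker (J.toLinearMap - LinearMap.id) ∧
      Mm = LinearMap.ker (J.toLinearMap + LinearMap.id) :=
    hD ▸ (LinearMap.isCompl_ker_sub_id_ker_add_id hJinv).sup_eq_top_iff_of_le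
      (fun x hx => by simp [hMp x hx]) (fun x hx => by simp [hMm x hx])
  refine ⟨?_, hDtop, fun htop => ?_⟩
  · rw [hDtop, ← hLp, ← hLm]
    exact and_assoc.symm
  · have hmem : ∀ f, f ∈ D := fun f => htop ▸ Submodule.mem_top
    exact ⟨fun f g => hsymm f (hmem f) g (hmem g), fun f hf => hsc f (hmem f) hf⟩

/-- For a symmetric strong contraction `T₀` on `D = M₊ ⊕ M₋` anticommuting
with `J`, the dual definite subspaces `L± = (I+T₀)M±` are maximal definite iff `D = ℋ`
(equivalently `M₊ = ℋ₊` and `M₋ = ℋ₋`); in this case `T₀` is an everywhere defined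
self-adjoint strong contraction. -/
theorem stmt_4
    {H : Type*} [NormedAddCommGroup H] [InnerProductSpace ℂ H] [CompleteSpace H]
    (J : H →L[ℂ] H) (hJsa : IsSelfAdjoint J) (hJ2 : J ∘L J = 1)
    (Mp Mm : Submodule ℂ H)
    (hMpc : IsClosed (Mp : Set H)) (hMmc : IsClosed (Mm : Set H))
    (hMp : ∀ x ∈ Mp, J x = x) (hMm : ∀ x ∈ Mm, J x = -x)
    (D : Submodule ℂ H) (hD : D = Mp ⊔ Mm) (hDc : IsClosed (D : Set H))
    (T₀ : H →ₗ[ℂ] H)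
    (hsc : ∀ f ∈ D, f ≠ 0 → ‖T₀ f‖ < ‖f‖)
    (hJD : ∀ f ∈ D, J f ∈ D)
    (hanti : ∀ f ∈ D, J (T₀ f) = -T₀ (J f))
    (hsymm : ∀ f ∈ D, ∀ g ∈ D, (inner ℂ (T₀ f) g : ℂ) = inner ℂ f (T₀ g)) :
    (((∀ f ∈ Mp.map (LinearMap.id + T₀), f ≠ 0 → 0 < (inner ℂ (J f) f : ℂ).re) ∧
      (∀ L' : Submodule ℂ H, (∀ f ∈ L', f ≠ 0 → 0 < (inner ℂ (J f) f : ℂ).re) →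
        Mp.map (LinearMap.id + T₀) ≤ L' → Mp.map (LinearMap.id + T₀) = L') ∧
      (∀ f ∈ Mm.map (LinearMap.id + T₀), f ≠ 0 → (inner ℂ (J f) f : ℂ).re < 0) ∧
      (∀ L' : Submodule ℂ H, (∀ f ∈ L', f ≠ 0 → (inner ℂ (J f) f : ℂ).re < 0) →
        Mm.map (LinearMap.id + T₀) ≤ L' → Mm.map (LinearMap.id + T₀) = L')) ↔
      D = ⊤) ∧
    (D = ⊤ ↔ (Mp = LinearMap.ker (J.toLinearMap - LinearMap.id) ∧
              Mm = LinearMap.ker (J.toLinearMap + LinearMap.id))) ∧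
    (D = ⊤ → (LinearMap.IsSymmetric T₀ ∧ ∀ f : H, f ≠ 0 → ‖T₀ f‖ < ‖f‖)) :=
  stmt_4_general J hJsa hJ2 Mp Mm hMpc hMmc hMp hMm D hD T₀ hsc hanti hsymm
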